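/- Let q, p : ℝ → ℝ³ be smooth curves with p(t) · q(t) = 1 and p'(t) = q(t) × q'(t) for all t, and suppose I := det(q, q', q'') and Ī := det(p, p', p'') are nowhere zero. Setting J := det(q', q'', q''') and K := det(q, q'', q'''), the curve p satisfies the third-order linear ODE p''' − (I'/I) p'' + (K/I) p' + (J/I) p = 0. -/

import Mathlib

open Matrix

/-! Differentiating `p ⬝ q = 1` along `p' = q × q'` gives `p ⬝ q' = 0`, then `p ⬝ q'' = 0`, then
`p ⬝ q''' = -I`; hence `I p = q' × q''` and `J = (q' × q'') ⬝ q''' = -I²`. On the other hand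
`p'' = q × q''` and `p''' = q' × q'' + q × q'''`, so the cross product of `q` with the tautological
ODE of `q` reads `p''' - (I'/I) p'' + (K/I) p' = q' × q'' = I p = -(J/I) p`. -/

/-- Scalar triple product on ℝ³. -/
def det3 (u v w : Fin 3 → ℝ) : ℝ := u ⬝ᵥ (v ⨯₃ w)

theorem HasDerivAt.crossProduct {f g : ℝ → Fin 3 → ℝ} {f' g' : Fin 3 → ℝ} {t : ℝ}
    (hf : HasDerivAt f f' t) (hg : HasDerivAt g g' t) :
    HasDerivAt (fun s => f s ⨯₃ g s) (f' ⨯₃ g t + f t ⨯₃ g') t := by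
  simpa [add_comm] using
    (_root_.crossProduct (R := ℝ)).toContinuousBilinearMap.hasDerivAt_of_bilinear
      (fun _ => hf) (fun _ => hg)

theorem HasDerivAt.dotProduct {ι : Type*} [Fintype ι] {f g : ℝ → ι → ℝ} {f' g' : ι → ℝ}
    {t : ℝ} (hf : HasDerivAt f f' t) (hg : HasDerivAt g g' t) :
    HasDerivAt (fun s => f s ⬝ᵥ g s) (f' ⬝ᵥ g t + f t ⬝ᵥ g') t := by
  simpa [add_comm] using
    (dotProductBilin ℝ ℝ (m := ι) (A := ℝ)).toContinuousBilinearMap.hasDerivAt_of_bilinear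
      (fun _ => hf) (fun _ => hg)

theorem dotProduct_deriv_eq_neg_of_forall_dotProduct_eq {ι : Type*} [Fintype ι]
    {f g : ℝ → ι → ℝ} {c t : ℝ} (hf : DifferentiableAt ℝ f t) (hg : DifferentiableAt ℝ g t)
    (h : ∀ s, f s ⬝ᵥ g s = c) :
    f t ⬝ᵥ deriv g t = -(deriv f t ⬝ᵥ g t) := by
  have hderiv := (hf.hasDerivAt.dotProduct hg.hasDerivAt).deriv
  rw [funext h, deriv_const] at hderiv
  linarith

theorem ContDiff.differentiable_deriv_deriv {F : Type*} [NormedAddCommGroup F]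
    [NormedSpace ℝ F] {f : ℝ → F} (hf : ContDiff ℝ 3 f) : Differentiable ℝ (deriv (deriv f)) := by
  simpa [iteratedDeriv_eq_iterate] using hf.differentiable_iteratedDeriv' 2

theorem det3_smul_eq (a b c d : Fin 3 → ℝ) :
    det3 a b c • d = det3 b c d • a - det3 a c d • b + det3 a b d • c := by
  ext i
  fin_cases i <;> simp [det3, cross_apply, dotProduct, Fin.sum_univ_three] <;> ring

theorem det3_smul_eq_dotProduct_smul (a b c v : Fin 3 → ℝ) :
    det3 a b c • v = (v ⬝ᵥ a) • (b ⨯₃ c) + (v ⬝ᵥ b) • (c ⨯₃ a) + (v ⬝ᵥ c) • (a ⨯₃ b) := by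
  ext i
  fin_cases i <;> simp [det3, cross_apply, dotProduct, Fin.sum_univ_three] <;> ring

-- Cramer's rule as the tautological ODE, with `a, b, c, d` in the roles of `q, q', q'', q'''`.
theorem sub_div_det3_smul_eq_zero {a b c d : Fin 3 → ℝ} (h : det3 a b c ≠ 0) :
    d - (det3 a b d / det3 a b c) • c + (det3 a c d / det3 a b c) • b
      - (det3 b c d / det3 a b c) • a = 0 := by
  rw [← (smul_right_injective _ h).eq_iff, smul_zero]
  simp only [smul_sub, smul_add, smul_smul, mul_div_cancel₀ _ h]
  linear_combination (norm := module) det3_smul_eq a b c d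

section CartanEngel

variable {q p : ℝ → Fin 3 → ℝ}

theorem deriv_det3_derivs (hq : ContDiff ℝ 3 q) (t : ℝ) :
    deriv (fun s => det3 (q s) (deriv q s) (deriv (deriv q) s)) t
      = det3 (q t) (deriv q t) (deriv (deriv (deriv q)) t) := by
  have hq0 := (hq.differentiable (by norm_num) t).hasDerivAt
  have hq1 := ((hq.of_le (by norm_num)).differentiable_deriv_two t).hasDerivAt
  have hq2 := (hq.differentiable_deriv_deriv t).hasDerivAt
  unfold det3
  rw [(hq0.dotProduct (hq1.crossProduct hq2)).deriv, cross_self, zero_add,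
    dot_self_cross, zero_add]

theorem deriv_deriv_eq_cross (hq : ContDiff ℝ 3 q) (hode : ∀ t, deriv p t = q t ⨯₃ deriv q t)
    (t : ℝ) : deriv (deriv p) t = q t ⨯₃ deriv (deriv q) t := by
  have hq0 := (hq.differentiable (by norm_num) t).hasDerivAt
  have hq1 := ((hq.of_le (by norm_num)).differentiable_deriv_two t).hasDerivAt
  rw [funext hode, (hq0.crossProduct hq1).deriv, cross_self, zero_add]

theorem deriv_deriv_deriv_eq_cross (hq : ContDiff ℝ 3 q)
    (hode : ∀ t, deriv p t = q t ⨯₃ deriv q t) (t : ℝ) :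
    deriv (deriv (deriv p)) t
      = deriv q t ⨯₃ deriv (deriv q) t + q t ⨯₃ deriv (deriv (deriv q)) t := by
  have hq0 := (hq.differentiable (by norm_num) t).hasDerivAt
  have hq2 := (hq.differentiable_deriv_deriv t).hasDerivAt
  rw [funext (deriv_deriv_eq_cross hq hode), (hq0.crossProduct hq2).deriv]

theorem dotProduct_deriv_eq_zero (hq : ContDiff ℝ 3 q) (hp : Differentiable ℝ p)
    (hpq : ∀ t, p t ⬝ᵥ q t = 1) (hode : ∀ t, deriv p t = q t ⨯₃ deriv q t) (t : ℝ) :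
    p t ⬝ᵥ deriv q t = 0 := by
  rw [dotProduct_deriv_eq_neg_of_forall_dotProduct_eq (hp t)
    (hq.differentiable (by norm_num) t) hpq, hode, dotProduct_comm, dot_self_cross, neg_zero]

theorem dotProduct_deriv_deriv_eq_zero (hq : ContDiff ℝ 3 q) (hp : Differentiable ℝ p)
    (hpq : ∀ t, p t ⬝ᵥ q t = 1) (hode : ∀ t, deriv p t = q t ⨯₃ deriv q t) (t : ℝ) :
    p t ⬝ᵥ deriv (deriv q) t = 0 := by
  rw [dotProduct_deriv_eq_neg_of_forall_dotProduct_eq (hp t)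
    ((hq.of_le (by norm_num)).differentiable_deriv_two t)
    (dotProduct_deriv_eq_zero hq hp hpq hode), hode, dotProduct_comm, dot_cross_self, neg_zero]

theorem dotProduct_deriv_deriv_deriv_eq (hq : ContDiff ℝ 3 q) (hp : Differentiable ℝ p)
    (hpq : ∀ t, p t ⬝ᵥ q t = 1) (hode : ∀ t, deriv p t = q t ⨯₃ deriv q t) (t : ℝ) :
    p t ⬝ᵥ deriv (deriv (deriv q)) t = -det3 (q t) (deriv q t) (deriv (deriv q) t) := by
  rw [dotProduct_deriv_eq_neg_of_forall_dotProduct_eq (hp t) (hq.differentiable_deriv_deriv t)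
    (dotProduct_deriv_deriv_eq_zero hq hp hpq hode), hode, dotProduct_comm,
    triple_product_permutation, det3]

theorem det3_smul_eq_cross (hq : ContDiff ℝ 3 q) (hp : Differentiable ℝ p)
    (hpq : ∀ t, p t ⬝ᵥ q t = 1) (hode : ∀ t, deriv p t = q t ⨯₃ deriv q t) (t : ℝ) :
    det3 (q t) (deriv q t) (deriv (deriv q) t) • p t = deriv q t ⨯₃ deriv (deriv q) t := by
  rw [det3_smul_eq_dotProduct_smul, hpq, dotProduct_deriv_eq_zero hq hp hpq hode,
    dotProduct_deriv_deriv_eq_zero hq hp hpq hode, one_smul, zero_smul, zero_smul, add_zero,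
    add_zero]

theorem det3_derivs_eq_neg_sq (hq : ContDiff ℝ 3 q) (hp : Differentiable ℝ p)
    (hpq : ∀ t, p t ⬝ᵥ q t = 1) (hode : ∀ t, deriv p t = q t ⨯₃ deriv q t) (t : ℝ) :
    det3 (deriv q t) (deriv (deriv q) t) (deriv (deriv (deriv q)) t)
      = -det3 (q t) (deriv q t) (deriv (deriv q) t) ^ 2 := by
  rw [det3, triple_product_permutation, triple_product_permutation, dotProduct_comm,
    ← det3_smul_eq_cross hq hp hpq hode,
    smul_dotProduct, dotProduct_deriv_deriv_deriv_eq hq hp hpq hode, smul_eq_mul]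
  ring

end CartanEngel

theorem dancing_mate_tautological_ODE (q p : ℝ → Fin 3 → ℝ)
    (hq : ContDiff ℝ (⊤ : ℕ∞) q) (hp : ContDiff ℝ (⊤ : ℕ∞) p)
    (hpq : ∀ t, p t ⬝ᵥ q t = 1)
    (hode : ∀ t, deriv p t = q t ⨯₃ deriv q t)
    (I : ℝ → ℝ) (hIdef : ∀ t, I t = det3 (q t) (deriv q t) (deriv (deriv q) t))
    (hI : ∀ t, I t ≠ 0) :
    ∀ t, deriv (deriv (deriv p)) t
        - (deriv I t / I t) • deriv (deriv p) t
        + (det3 (q t) (deriv (deriv q) t) (deriv (deriv (deriv q)) t) / I t)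
            • deriv p t
        + (det3 (deriv q t) (deriv (deriv q) t) (deriv (deriv (deriv q)) t) / I t)
            • p t = 0 := by
  intro t
  have hq3 : ContDiff ℝ 3 q := hq.of_le (by norm_cast)
  have hp1 : Differentiable ℝ p := hp.differentiable (by norm_cast)
  have hderivI : deriv I t = det3 (q t) (deriv q t) (deriv (deriv (deriv q)) t) := by
    rw [funext hIdef, deriv_det3_derivs hq3]
  have hJ : det3 (deriv q t) (deriv (deriv q) t) (deriv (deriv (deriv q)) t) / I t = -I t := by
    rw [det3_derivs_eq_neg_sq hq3 hp1 hpq hode, ← hIdef, neg_div, sq,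
      mul_div_cancel_right₀ _ (hI t)]
  have hIp : I t • p t = deriv q t ⨯₃ deriv (deriv q) t := by
    rw [hIdef, det3_smul_eq_cross hq3 hp1 hpq hode]
  have hodeq := congrArg (crossProduct (q t))
    (sub_div_det3_smul_eq_zero (d := deriv (deriv (deriv q)) t) (hIdef t ▸ hI t))
  simp only [← hIdef, map_sub, map_add, map_smul, cross_self, smul_zero, sub_zero,
    map_zero] at hodeq
  rw [deriv_deriv_deriv_eq_cross hq3 hode, deriv_deriv_eq_cross hq3 hode, hode, hderivI, hJ]
  linear_combination (norm := module) hodeq - hIp
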